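/- For all nonnegative integers a and b, the quantity Λ(a,b) := ∑_{j=1}^{b} κ_{j+a−1} · (b − 1 + κ_{j−1} + κ_{b−j} − κ_b) is nonnegative: Λ(a,b) ≥ 0. -/

import Mathlib

open Finset Filter Topology

/-- The `n`-th harmonic number `H_n = ∑_{i=1}^n 1/i`. -/
noncomputable def H (n : ℕ) : ℝ := ∑ i ∈ Finset.range n, (1 : ℝ) / (i + 1)

/-- `κ_n = 2(n+1)H_n - 4n`, the mean number of key comparisons for QuickSort on `n` keys. -/
noncomputable def κ (n : ℕ) : ℝ := 2 * (n + 1) * H n - 4 * n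

/-!
Put `m = b - 1` and reindex by `i = j - 1 ∈ [0, m]`. The weights
`c_i = m + κ_i + κ_{m-i} - κ_{m+1}` sum to zero: this is the QuickSort recurrence
`κ_n = n - 1 + (2/n) ∑_{i<n} κ_i`. They are symmetric under `i ↦ m - i`, so `Λ(a, b)` is half of
`∑ c_i (κ_{i+a} + κ_{m-i+a})`. Since `κ` is discretely convex, both `c_i` and
`κ_{i+a} + κ_{m-i+a}` decrease as `i` moves towards the centre `m/2`, so they are similarly
ordered, and Chebyshev's sum inequality bounds the sum below by `(∑ c_i)(∑ ⋯)/(m+1) = 0`.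
-/

lemma H_succ (n : ℕ) : H (n + 1) = H n + 1 / ((n : ℝ) + 1) := by
  simp [H, sum_range_succ]

lemma H_mono : Monotone H :=
  monotone_nat_of_le_succ fun n => by
    rw [H_succ]
    exact le_add_of_nonneg_right (by positivity)

lemma κ_succ_sub (n : ℕ) : κ (n + 1) - κ n = 2 * H (n + 1) - 2 := by
  have hn : (n : ℝ) + 1 ≠ 0 := by positivity
  simp only [κ, H_succ]
  push_cast
  field_simp
  ring

lemma monotone_κ_succ_sub : Monotone fun n => κ (n + 1) - κ n := fun m n hmn => by
  simp only [κ_succ_sub]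
  linarith [H_mono (Nat.succ_le_succ hmn)]

lemma two_mul_sum_range_κ (n : ℕ) :
    2 * ∑ i ∈ range n, κ i = n * κ n - n * ((n : ℝ) - 1) := by
  induction n with
  | zero => simp
  | succ n ih =>
    have hn : (n : ℝ) + 1 ≠ 0 := by positivity
    rw [sum_range_succ, mul_add, ih]
    simp only [κ, H_succ]
    push_cast
    field_simp
    ring

lemma sum_range_sub_κ_add_κ_add_κ_sub (m : ℕ) :
    ∑ i ∈ range (m + 1), ((m - κ (m + 1)) + κ i + κ (m - i)) = 0 := by
  have hreflect := sum_range_reflect κ (m + 1)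
  simp only [add_tsub_cancel_right] at hreflect
  rw [sum_add_distrib, sum_add_distrib, hreflect, sum_const, card_range, nsmul_eq_mul]
  have hrec := two_mul_sum_range_κ (m + 1)
  push_cast at hrec ⊢
  linarith

section PairSum

variable {f g : ℕ → ℝ} {m : ℕ}

lemma add_apply_sub_le_of_le (hf : Monotone fun n => f (n + 1) - f n) {u v : ℕ} (huv : u ≤ v)
    (hv : 2 * v ≤ m) : f v + f (m - v) ≤ f u + f (m - u) := by
  induction v, huv using Nat.le_induction with
  | base => rfl
  | succ v _ ih =>
    have hstep : f (v + 1) - f v ≤ f (m - (v + 1) + 1) - f (m - (v + 1)) := hf (by omega)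
    rw [show m - (v + 1) + 1 = m - v by omega] at hstep
    linarith [ih (by omega)]

lemma add_apply_sub_eq_min {i : ℕ} (hi : i ≤ m) :
    f i + f (m - i) = f (min i (m - i)) + f (m - min i (m - i)) := by
  rcases le_total i (m - i) with h | h
  · rw [min_eq_left h]
  · rw [min_eq_right h, Nat.sub_sub_self hi, add_comm]

lemma add_apply_sub_le_of_min_le (hf : Monotone fun n => f (n + 1) - f n) {i j : ℕ} (hi : i ≤ m)
    (hj : j ≤ m) (h : min j (m - j) ≤ min i (m - i)) : f i + f (m - i) ≤ f j + f (m - j) := by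
  rw [add_apply_sub_eq_min hi, add_apply_sub_eq_min hj]
  exact add_apply_sub_le_of_le hf h (by omega)

lemma monovaryOn_add_apply_sub (hf : Monotone fun n => f (n + 1) - f n)
    (hg : Monotone fun n => g (n + 1) - g n) (C : ℝ) :
    MonovaryOn (fun i => C + f i + f (m - i)) (fun i => g i + g (m - i)) (range (m + 1)) := by
  intro i hi j hj hlt
  simp only [coe_range, Set.mem_Iio, Nat.lt_succ_iff] at hi hj
  have hmin : min j (m - j) ≤ min i (m - i) := by
    by_contra! h
    exact hlt.not_ge (add_apply_sub_le_of_min_le hg hj hi h.le)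
  linarith [add_apply_sub_le_of_min_le hf hi hj hmin]

theorem sum_mul_add_apply_sub_nonneg (hf : Monotone fun n => f (n + 1) - f n)
    (hg : Monotone fun n => g (n + 1) - g n) (C : ℝ)
    (hsum : ∑ i ∈ range (m + 1), (C + f i + f (m - i)) = 0) :
    0 ≤ ∑ i ∈ range (m + 1), g i * (C + f i + f (m - i)) := by
  have hcheb := (monovaryOn_add_apply_sub (m := m) hf hg C).sum_mul_sum_le_card_mul_sum
  rw [hsum, zero_mul, card_range] at hcheb
  have hreflect : ∑ i ∈ range (m + 1), g (m - i) * (C + f i + f (m - i))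
      = ∑ i ∈ range (m + 1), g i * (C + f i + f (m - i)) := by
    rw [← sum_range_reflect]
    refine sum_congr rfl fun i hi => ?_
    rw [show m + 1 - 1 - i = m - i by omega, Nat.sub_sub_self (mem_range_succ_iff.mp hi)]
    ring
  have hsplit : ∑ i ∈ range (m + 1), (C + f i + f (m - i)) * (g i + g (m - i))
      = 2 * ∑ i ∈ range (m + 1), g i * (C + f i + f (m - i)) := by
    rw [two_mul]
    nth_rewrite 1 [← hreflect]
    rw [← sum_add_distrib]
    exact sum_congr rfl fun i _ => by ring
  rw [hsplit] at hcheb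
  have := nonneg_of_mul_nonneg_right hcheb (by positivity)
  linarith

end PairSum

theorem lambda_nonneg (a b : ℕ) :
    0 ≤ ∑ j ∈ Finset.Icc 1 b,
      κ (j + a - 1) * ((b : ℝ) - 1 + κ (j - 1) + κ (b - j) - κ b) := by
  rcases b with _ | m
  · simp
  have hshift : Monotone fun n => κ (n + 1 + a) - κ (n + a) := fun _ _ h => by
    simpa only [add_right_comm _ 1 a] using monotone_κ_succ_sub (Nat.add_le_add_right h a)
  convert sum_mul_add_apply_sub_nonneg (g := fun n => κ (n + a)) monotone_κ_succ_sub hshift _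
    (sum_range_sub_κ_add_κ_add_κ_sub m) using 1
  rw [← Ico_add_one_right_eq_Icc, sum_Ico_eq_sum_range, add_tsub_cancel_right]
  refine sum_congr rfl fun i _ => ?_
  rw [show 1 + i + a - 1 = i + a by omega, show 1 + i - 1 = i by omega,
    show m + 1 - (1 + i) = m - i by omega]
  push_cast
  ring
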